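/- Consider the multi-dimensional intermediate pressure p*_{i+1/2,j} = ({{{p}_{i+1/2}}}_{j±1/2})/8 - (aε/2)·( ({{[u]_{i+1/2}}}_{j±1/2})/4 + (Δx/Δy)·([{v}_{i+1/2}]_{j±1})/4 ). Then the velocity-dependent part of p*_{i+1/2,j} equals -(aε·Δx/2)·(1/2)·(D_{i+1/2,j+1/2} + D_{i+1/2,j-1/2}) where D_{i+1/2,j+1/2} = ({[u]_{i+1/2}}_{j+1/2})/(2Δx) + ([{v}_{i+1/2}]_{j+1/2})/(2Δy) is the vertex-based discrete divergence. In particular if D vanishes identically, the diffusive part of p* vanishes. -/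

import Mathlib

section VertexDivergence

variable {K : Type*} [Field K]

/-- `vertexDiv u v Δx Δy (i, j)` is the paper's `D_{i+1/2, j+1/2}`. -/
def vertexDiv (u v : ℤ × ℤ → K) (Δx Δy : K) : ℤ × ℤ → K
  | (i, j) => (u (i+1, j+1) - u (i, j+1) + u (i+1, j) - u (i, j)) / (2*Δx)
      + (v (i+1, j+1) - v (i+1, j) + v (i, j+1) - v (i, j)) / (2*Δy)

theorem velocityStencil_eq_mul_avg_vertexDiv (u v : ℤ × ℤ → K) {Δx : K} (Δy : K)
    (hΔx : Δx ≠ 0) (i j : ℤ) :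
    ((u (i+1, j+1) - u (i, j+1)) + 2*(u (i+1, j) - u (i, j)) + (u (i+1, j-1) - u (i, j-1))) / 4
        + (Δx/Δy) * (((v (i, j+1) + v (i+1, j+1)) - (v (i, j-1) + v (i+1, j-1))) / 4)
      = Δx * ((1/2) * (vertexDiv u v Δx Δy (i, j) + vertexDiv u v Δx Δy (i, j-1))) := by
  simp only [vertexDiv, sub_add_cancel]
  field_simp
  ring

end VertexDivergence

theorem stmt_12_general (u v : ℤ × ℤ → ℝ) (a ε Δx Δy : ℝ)
    (hΔx : 0 < Δx)
    (D : ℤ × ℤ → ℝ)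
    (hD : ∀ i j : ℤ, D (i, j) =
      (u (i+1, j+1) - u (i, j+1) + u (i+1, j) - u (i, j)) / (2*Δx)
      + (v (i+1, j+1) - v (i+1, j) + v (i, j+1) - v (i, j)) / (2*Δy)) :
    (∀ i j : ℤ,
      -(a*ε/2) * (((u (i+1, j+1) - u (i, j+1)) + 2*(u (i+1, j) - u (i, j))
          + (u (i+1, j-1) - u (i, j-1))) / 4
        + (Δx/Δy) * (((v (i, j+1) + v (i+1, j+1)) - (v (i, j-1) + v (i+1, j-1))) / 4))
      = -(a*ε*Δx/2) * ((1/2) * (D (i, j) + D (i, j-1))))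
    ∧ ((∀ i j : ℤ, D (i, j) = 0) → ∀ i j : ℤ,
      -(a*ε/2) * (((u (i+1, j+1) - u (i, j+1)) + 2*(u (i+1, j) - u (i, j))
          + (u (i+1, j-1) - u (i, j-1))) / 4
        + (Δx/Δy) * (((v (i, j+1) + v (i+1, j+1)) - (v (i, j-1) + v (i+1, j-1))) / 4)) = 0) := by
  obtain rfl : D = vertexDiv u v Δx Δy := funext fun ⟨i, j⟩ => hD i j
  have hvel := velocityStencil_eq_mul_avg_vertexDiv u v Δy hΔx.ne'
  refine ⟨fun i j => ?_, fun hD0 i j => ?_⟩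
  · rw [hvel]
    ring
  · rw [hvel, hD0, hD0]
    ring

theorem stmt_12 (u v : ℤ × ℤ → ℝ) (a ε Δx Δy : ℝ)
    (ha : 0 < a) (hε : 0 < ε) (hΔx : 0 < Δx) (hΔy : 0 < Δy)
    (D : ℤ × ℤ → ℝ)
    (hD : ∀ i j : ℤ, D (i, j) =
      (u (i+1, j+1) - u (i, j+1) + u (i+1, j) - u (i, j)) / (2*Δx)
      + (v (i+1, j+1) - v (i+1, j) + v (i, j+1) - v (i, j)) / (2*Δy)) :
    (∀ i j : ℤ,
      -(a*ε/2) * (((u (i+1, j+1) - u (i, j+1)) + 2*(u (i+1, j) - u (i, j))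
          + (u (i+1, j-1) - u (i, j-1))) / 4
        + (Δx/Δy) * (((v (i, j+1) + v (i+1, j+1)) - (v (i, j-1) + v (i+1, j-1))) / 4))
      = -(a*ε*Δx/2) * ((1/2) * (D (i, j) + D (i, j-1))))
    ∧ ((∀ i j : ℤ, D (i, j) = 0) → ∀ i j : ℤ,
      -(a*ε/2) * (((u (i+1, j+1) - u (i, j+1)) + 2*(u (i+1, j) - u (i, j))
          + (u (i+1, j-1) - u (i, j-1))) / 4
        + (Δx/Δy) * (((v (i, j+1) + v (i+1, j+1)) - (v (i, j-1) + v (i+1, j-1))) / 4)) = 0) :=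
  stmt_12_general u v a ε Δx Δy hΔx D hD
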